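/- arXiv:2403.03430 — 4 statements merged into one kernel-verified Lean document; each statement's English description precedes it below -/
import Mathlib

section
/- Fix any single sample path of the DCBO recursion. If the best objective value is strictly decreased only finitely many times, i.e. there is N₀ such that f(p_{n+1}) = f(p_n) for all n ≥ N₀, then the minimal minimizing index i_n := min I_n is eventually constant, equal to some i_∞, and the consensus point is eventually constant: there exist i_∞ ∈ {1,…,N}, N₁ ≥ N₀ and a point p_∞ ∈ S such that p_n = x_n^{i_∞} = p_∞ for all n ≥ N₁. -/
open MeasureTheory Filter Topology

noncomputable section

/-- `Euc d` is the `d`-dimensional Euclidean space `ℝ^d`. -/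
abbrev Euc (d : ℕ) := EuclideanSpace ℝ (Fin d)

/-- Entrywise (Hadamard) product on `ℝ^d`. -/
def hadamard {d : ℕ} (u v : Euc d) : Euc d := WithLp.toLp 2 (fun k => u k * v k)

/-- The anisotropic DCBO update map `F₁(x,y,η) = x + γ¹(y−x) + γ²(y−x)⊙η`. -/
def F1 {d : ℕ} (γ1 γ2 : ℝ) (x y η : Euc d) : Euc d :=
  x + γ1 • (y - x) + γ2 • hadamard (y - x) η

/-- The isotropic DCBO update map `F₂(x,y,η) = x + γ̄¹(y−x) + γ̄²‖y−x‖η/√d`. -/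
def F2 {d : ℕ} (γ1 γ2 : ℝ) (x y η : Euc d) : Euc d :=
  x + γ1 • (y - x) + ((γ2 * ‖y - x‖) / Real.sqrt d) • η

/-!
Both update maps satisfy `F (x, x, η) = x`, so the leader `ι n` does not move in step `n`.
Hence `f (p n)` is nonincreasing, and once it stalls the old leader is still a minimizer at
time `n + 1`, so the tie-breaking rule gives `ι (n + 1) ≤ ι n`. A nonincreasing sequence in
`Fin N` is eventually constant, and then the leader, hence the consensus point, never moves
again. Membership in `S` follows from `f (p n) ≤ f (p 0) < ⊤`.
-/

@[simp]
lemma hadamard_zero_left {d : ℕ} (v : Euc d) : hadamard 0 v = 0 := by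
  ext k
  simp [hadamard]

@[simp]
lemma F1_self {d : ℕ} (γ1 γ2 : ℝ) (x η : Euc d) : F1 γ1 γ2 x x η = x := by
  simp [F1]

@[simp]
lemma F2_self {d : ℕ} (γ1 γ2 : ℝ) (x η : Euc d) : F2 γ1 γ2 x x η = x := by
  simp [F2]

section Leader

variable {α β κ : Type*} {f : α → β} {x : ℕ → κ → α} {lead : ℕ → κ}

theorem antitone_leader_value [Preorder β] (hmin : ∀ n j, f (x n (lead n)) ≤ f (x n j))
    (hfix : ∀ n, x (n + 1) (lead n) = x n (lead n)) :
    Antitone fun n => f (x n (lead n)) :=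
  antitone_nat_of_succ_le fun n => (hmin (n + 1) (lead n)).trans_eq (by rw [hfix])

theorem leader_succ_le_of_value_eq [LE κ] (htie : ∀ n j, f (x n j) = f (x n (lead n)) → lead n ≤ j)
    (hfix : ∀ n, x (n + 1) (lead n) = x n (lead n)) {n : ℕ}
    (hstall : f (x (n + 1) (lead (n + 1))) = f (x n (lead n))) :
    lead (n + 1) ≤ lead n :=
  htie _ _ (by rw [hfix, hstall])

theorem exists_leader_eventually_eq [PartialOrder κ] [WellFoundedLT κ]
    (htie : ∀ n j, f (x n j) = f (x n (lead n)) → lead n ≤ j)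
    (hfix : ∀ n, x (n + 1) (lead n) = x n (lead n)) {N₀ : ℕ}
    (hstall : ∀ n, N₀ ≤ n → f (x (n + 1) (lead (n + 1))) = f (x n (lead n))) :
    ∃ N₁, N₀ ≤ N₁ ∧ ∀ n, N₁ ≤ n → lead n = lead N₁ := by
  have hanti : Antitone fun k => lead (N₀ + k) := antitone_nat_of_succ_le fun k =>
    leader_succ_le_of_value_eq htie hfix (hstall (N₀ + k) (Nat.le_add_right _ _))
  obtain ⟨k, hk⟩ := WellFoundedLT.antitone_chain_condition hanti
  refine ⟨N₀ + k, Nat.le_add_right _ _, fun n hn => ?_⟩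
  obtain ⟨m, rfl⟩ := Nat.exists_eq_add_of_le hn
  simpa [Nat.add_assoc] using (hk (k + m) (Nat.le_add_right _ _)).symm

theorem leader_point_eq_of_leader_eq (hfix : ∀ n, x (n + 1) (lead n) = x n (lead n))
    {N₁ : ℕ} (hconst : ∀ n, N₁ ≤ n → lead n = lead N₁) :
    ∀ n, N₁ ≤ n → x n (lead n) = x N₁ (lead N₁) := by
  intro n hn
  induction n, hn using Nat.le_induction with
  | base => rfl
  | succ m hm ih =>
    rw [← ih, hconst (m + 1) (by omega), ← hconst m hm, hfix]

end Leader

theorem dcbo_eventually_constant_consensus_point_general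
    {d N : ℕ}
    (f : Euc d → EReal)
    (S : Set (Euc d)) (hS : S = {y | f y < ⊤})
    (γ1 γ2 γb1 γb2 : ℝ)
    (choice : Fin N → Bool)
    (x : ℕ → Fin N → Euc d) (η : ℕ → Fin N → Euc d)
    (p : ℕ → Euc d) (ι : ℕ → Fin N)
    (hp : ∀ n, p n = x n (ι n))
    (hmin : ∀ n j, f (x n (ι n)) ≤ f (x n j))
    (htie : ∀ n j, f (x n j) = f (x n (ι n)) → ι n ≤ j)
    (hrec : ∀ n i, x (n+1) i =
      if choice i then F1 γ1 γ2 (x n i) (p n) (η n i)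
      else F2 γb1 γb2 (x n i) (p n) (η n i))
    (hx0 : ∀ i, x 0 i ∈ S)
    (N₀ : ℕ) (hstall : ∀ n, N₀ ≤ n → f (p (n+1)) = f (p n)) :
    ∃ (iLim : Fin N) (N₁ : ℕ) (pLim : Euc d), N₀ ≤ N₁ ∧ pLim ∈ S ∧
      ∀ n, N₁ ≤ n → ι n = iLim ∧ p n = x n iLim ∧ p n = pLim := by
  subst hS
  have hfix : ∀ n, x (n + 1) (ι n) = x n (ι n) := fun n => by
    rw [hrec, hp]
    split <;> simp
  obtain ⟨N₁, hN₀₁, hι⟩ := exists_leader_eventually_eq htie hfix (by simpa only [hp] using hstall)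
  refine ⟨ι N₁, N₁, x N₁ (ι N₁), hN₀₁, ?_, fun n hn => ⟨hι n hn, ?_, ?_⟩⟩
  · exact (antitone_leader_value hmin hfix (Nat.zero_le N₁)).trans_lt (hx0 (ι 0))
  · rw [hp, hι n hn]
  · rw [hp, leader_point_eq_of_leader_eq hfix hι n hn]

/-- On a sample path of the DCBO recursion on which the best value
is strictly decreased only finitely many times (say `f(p_{n+1}) = f(p_n)` for all
`n ≥ N₀`), the minimal minimizing index `ι n` is eventually constant, equal to some
`iLim`, and the consensus point is eventually constant: there are `iLim`, `N₁ ≥ N₀` and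
`pLim ∈ S` with `p_n = x_n^{iLim} = pLim` for all `n ≥ N₁`. -/
theorem dcbo_eventually_constant_consensus_point
    {d N : ℕ} (hd : 1 ≤ d) (hN : 1 ≤ N)
    (f : Euc d → EReal) (hf : Measurable f)
    (S : Set (Euc d)) (hS : S = {y | f y < ⊤}) (hSne : S.Nonempty) (hScl : IsClosed S)
    (γ1 γ2 γb1 γb2 : ℝ)
    (hγ1 : γ1 ∈ Set.Ioo (0:ℝ) 1) (hγ2 : 0 ≤ γ2)
    (hγb1 : γb1 ∈ Set.Ioo (0:ℝ) 1) (hγb2 : 0 ≤ γb2)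
    (choice : Fin N → Bool)
    (x : ℕ → Fin N → Euc d) (η : ℕ → Fin N → Euc d)
    (p : ℕ → Euc d) (ι : ℕ → Fin N)
    (hp : ∀ n, p n = x n (ι n))
    (hmin : ∀ n j, f (x n (ι n)) ≤ f (x n j))
    (htie : ∀ n j, f (x n j) = f (x n (ι n)) → ι n ≤ j)
    (hrec : ∀ n i, x (n+1) i =
      if choice i then F1 γ1 γ2 (x n i) (p n) (η n i)
      else F2 γb1 γb2 (x n i) (p n) (η n i))
    (hx0 : ∀ i, x 0 i ∈ S)
    (N₀ : ℕ) (hstall : ∀ n, N₀ ≤ n → f (p (n+1)) = f (p n)) :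
    ∃ (iLim : Fin N) (N₁ : ℕ) (pLim : Euc d), N₀ ≤ N₁ ∧ pLim ∈ S ∧
      ∀ n, N₁ ≤ n → ι n = iLim ∧ p n = x n iLim ∧ p n = pLim :=
  dcbo_eventually_constant_consensus_point_general f S hS γ1 γ2 γb1 γb2 choice x η p ι hp hmin htie
    hrec hx0 N₀ hstall
end
end

section
/- Let (X_n)_{n≥0} be independent, identically distributed nonnegative real random variables, and suppose there exists β > 0 with E[X_0^β] < 1. Then the running products converge to zero almost surely: ∏_{l=0}^{n−1} X_l → 0 as n → ∞, almost surely. -/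
open MeasureTheory ProbabilityTheory Filter Topology

/-! The strong law of large numbers applied to `X_l ^ β` makes the Cesàro means of `X_l ^ β`
converge almost surely to `E[X_0 ^ β] < 1`. By AM-GM, `∏_{l<n} X_l ^ β` is at most the `n`-th
power of that mean, hence eventually at most `c ^ n` for some `c < 1`; taking `β`-th roots gives
the claim. -/

namespace Real

theorem prod_le_sum_div_card_pow {ι : Type*} (s : Finset ι) {z : ι → ℝ}
    (hz : ∀ i ∈ s, 0 ≤ z i) : ∏ i ∈ s, z i ≤ ((∑ i ∈ s, z i) / s.card) ^ s.card := by
  rcases s.eq_empty_or_nonempty with rfl | hs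
  · simp
  have hcard : (0 : ℝ) < s.card := by exact_mod_cast hs.card_pos
  have hamgm := geom_mean_le_arith_mean s (fun _ => 1) z (fun _ _ => zero_le_one)
    (by simpa using hcard) hz
  simp only [rpow_one, one_mul, Finset.sum_const, nsmul_eq_mul, mul_one] at hamgm
  calc ∏ i ∈ s, z i = ((∏ i ∈ s, z i) ^ ((s.card : ℝ))⁻¹) ^ s.card :=
        (rpow_inv_natCast_pow (Finset.prod_nonneg hz) hs.card_pos.ne').symm
    _ ≤ ((∑ i ∈ s, z i) / s.card) ^ s.card := by
          gcongr
          exact rpow_nonneg (Finset.prod_nonneg hz) _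

theorem tendsto_prod_range_zero_of_tendsto_average_lt_one {y : ℕ → ℝ} {m : ℝ} (hy : ∀ i, 0 ≤ y i)
    (hmean : Tendsto (fun n : ℕ => (∑ i ∈ Finset.range n, y i) / n) atTop (𝓝 m)) (hm : m < 1) :
    Tendsto (fun n => ∏ i ∈ Finset.range n, y i) atTop (𝓝 0) := by
  have hmean_nonneg : ∀ n : ℕ, 0 ≤ (∑ i ∈ Finset.range n, y i) / n :=
    fun n => div_nonneg (Finset.sum_nonneg fun i _ => hy i) n.cast_nonneg
  obtain ⟨c, hmc, hc1⟩ := exists_between hm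
  have hc0 : 0 ≤ c := (ge_of_tendsto' hmean hmean_nonneg).trans hmc.le
  have hprod_le : ∀ᶠ n in atTop, ∏ i ∈ Finset.range n, y i ≤ c ^ n := by
    filter_upwards [hmean.eventually_lt_const hmc] with n hn
    calc ∏ i ∈ Finset.range n, y i ≤ ((∑ i ∈ Finset.range n, y i) / n) ^ n := by
          simpa using prod_le_sum_div_card_pow (Finset.range n) fun i _ => hy i
      _ ≤ c ^ n := pow_le_pow_left₀ (hmean_nonneg n) hn.le n
  exact tendsto_of_tendsto_of_tendsto_of_le_of_le' tendsto_const_nhds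
    (tendsto_pow_atTop_nhds_zero_of_lt_one hc0 hc1)
    (Eventually.of_forall fun n => Finset.prod_nonneg fun i _ => hy i) hprod_le

theorem tendsto_zero_of_tendsto_rpow_zero {α : Type*} {l : Filter α} {f : α → ℝ} {β : ℝ}
    (hf : ∀ a, 0 ≤ f a) (hβ : 0 < β) (h : Tendsto (fun a => f a ^ β) l (𝓝 0)) :
    Tendsto f l (𝓝 0) := by
  have := h.rpow_const (p := β⁻¹) (Or.inr (inv_nonneg.2 hβ.le))
  simpa [zero_rpow (inv_ne_zero hβ.ne'), ← rpow_mul (hf _), mul_inv_cancel₀ hβ.ne'] using this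

end Real

theorem iid_products_tendsto_zero_general
    {Ω : Type*} [MeasurableSpace Ω] (P : Measure Ω)
    (X : ℕ → Ω → ℝ) (hXmeas : ∀ n, Measurable (X n))
    (hXnonneg : ∀ n ω, 0 ≤ X n ω)
    (hindep : iIndepFun X P)
    (hident : ∀ n, Measure.map (X n) P = Measure.map (X 0) P)
    (β : ℝ) (hβ : 0 < β)
    (hint : Integrable (fun ω => X 0 ω ^ β) P)
    (hmom : ∫ ω, X 0 ω ^ β ∂P < 1) :
    ∀ᵐ ω ∂P, Tendsto (fun n => ∏ l ∈ Finset.range n, X l ω) atTop (nhds 0) := by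
  have hpow : Measurable fun x : ℝ => x ^ β := measurable_id.pow_const β
  have hindep_pow : Pairwise (Function.onFun (IndepFun · · P) fun n ω => X n ω ^ β) :=
    fun i j hij => (hindep.indepFun hij).comp hpow hpow
  have hident_pow : ∀ n, IdentDistrib (fun ω => X n ω ^ β) (fun ω => X 0 ω ^ β) P P :=
    fun n => IdentDistrib.comp ⟨(hXmeas n).aemeasurable, (hXmeas 0).aemeasurable, hident n⟩ hpow
  filter_upwards [strong_law_ae_real _ hint hindep_pow hident_pow] with ω hmean
  refine Real.tendsto_zero_of_tendsto_rpow_zero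
    (fun n => Finset.prod_nonneg fun l _ => hXnonneg l ω) hβ ?_
  simp_rw [← Real.finsetProd_rpow _ _ fun l _ => hXnonneg l ω]
  exact Real.tendsto_prod_range_zero_of_tendsto_average_lt_one
    (fun l => Real.rpow_nonneg (hXnonneg l ω) β) hmean hmom

/-- If `(X_n)` are i.i.d. nonnegative real random variables and
`E[X_0^β] < 1` for some `β > 0` (the `β`-th moment being finite), then the running
products `∏_{l=0}^{n−1} X_l` converge to zero almost surely. -/
theorem iid_products_tendsto_zero
    {Ω : Type*} [MeasurableSpace Ω] (P : Measure Ω) [IsProbabilityMeasure P]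
    (X : ℕ → Ω → ℝ) (hXmeas : ∀ n, Measurable (X n))
    (hXnonneg : ∀ n ω, 0 ≤ X n ω)
    (hindep : iIndepFun X P)
    (hident : ∀ n, Measure.map (X n) P = Measure.map (X 0) P)
    (β : ℝ) (hβ : 0 < β)
    (hint : Integrable (fun ω => X 0 ω ^ β) P)
    (hmom : ∫ ω, X 0 ω ^ β ∂P < 1) :
    ∀ᵐ ω ∂P, Tendsto (fun n => ∏ l ∈ Finset.range n, X l ω) atTop (nhds 0) :=
  iid_products_tendsto_zero_general P X hXmeas hXnonneg hindep hident β hβ hint hmom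
end

section
/- (DCBO with restart.) Let f : ℝ^d → ℝ ∪ {+∞} be Borel measurable and ρ_in a Borel probability measure on ℝ^d with supp(ρ_in) ⊂ S. Suppose (p^m)_{m≥1} is a random sequence in S and, for each round m, (x_0^{i,m})_{i=2,…,N} are fresh samples, i.i.d. with law ρ_in and independent across rounds, such that f(p^{m+1}) ≤ min{ f(p^m), f(x_0^{2,m}), …, f(x_0^{N,m}) } almost surely for every m (this is guaranteed by running one round of DCBO started from (p^m, x_0^{2,m}, …, x_0^{N,m}) and using the monotonicity of the best value). Then almost surely the sequence f(p^m) is monotone decreasing and lim_{m→∞} f(p^m) ≤ f*_{ρ_in}, where f*_{ρ_in} := ess inf of f with respect to ρ_in. If moreover f is continuous on S, f attains its global minimum, and supp(ρ_in) = S, then lim_{m→∞} f(p^m) = min f almost surely. -/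
open MeasureTheory ProbabilityTheory Filter Topology

noncomputable section

/-!
Along almost every path the best values `f (p^m)` are nonincreasing, so they converge to their
infimum, and `f (p^{m+1})` is below the value at any fresh sample of round `m`. For every level
`c` above the essential infimum the set `{f < c}` has positive `ρ_in`-mass, so by the second
Borel–Cantelli lemma a fresh sample lands in it infinitely often; intersecting over rational
levels gives `lim f (p^m) ≤ f*`. When `f` is continuous on `S` and `ρ_in` charges every
neighbourhood of a minimiser, every level above `min f` has positive mass, so `f* ≤ min f`,
which forces the limit to be `min f`.
-/

namespace MeasureTheory

theorem measure_lt_ne_zero_of_essInf_lt {α β : Type*} [MeasurableSpace α] [CompleteLinearOrder β]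
    {μ : Measure α} {f : α → β} {c : β} (hc : essInf f μ < c) : μ {x | f x < c} ≠ 0 :=
  fun h => hc.not_ge (essInf_eq_sSup μ f ▸ le_sSup h)

theorem essInf_le_of_continuousWithinAt {α β : Type*} [MeasurableSpace α] [TopologicalSpace α]
    [CompleteLinearOrder β] [TopologicalSpace β] [OrderTopology β] [FirstCountableTopology β]
    {μ : Measure α} {f : α → β} {S : Set α} {x : α} (hf : ContinuousWithinAt f S x)
    (hSc : μ Sᶜ = 0) (hx : ∀ U, IsOpen U → x ∈ U → 0 < μ U) : essInf f μ ≤ f x := by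
  by_contra! hlt
  obtain ⟨U, hU, hxU, hUS⟩ := mem_nhdsWithin.1 (hf (Iio_mem_nhds hlt))
  have hpos : 0 < μ {y | f y < essInf f μ} := calc
    0 < μ U := hx U hU hxU
    _ = μ (U ∩ S) := (measure_inter_conull hSc).symm
    _ ≤ μ {y | f y < essInf f μ} := measure_mono hUS
  exact hpos.ne' meas_lt_essInf

end MeasureTheory

namespace ProbabilityTheory

variable {Ω α : Type*} [MeasurableSpace Ω] [MeasurableSpace α] {P : Measure Ω}

theorem iIndepFun.iIndepSet_preimage {ι : Type*} {X : ι → Ω → α} (h : iIndepFun X P)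
    {A : ι → Set α} (hA : ∀ i, MeasurableSet (A i)) : iIndepSet (fun i => X i ⁻¹' A i) P := by
  rw [iIndepSet_iff]
  intro s t ht
  refine h.meas_biInter fun i hi => ?_
  exact MeasurableSpace.generateFrom_le (by rintro _ rfl; exact ⟨A i, hA i, rfl⟩) _ (ht i hi)

theorem ae_frequently_mem_of_iIndepFun {μ : Measure α} {X : ℕ → Ω → α}
    (hX : ∀ n, Measurable (X n)) (hindep : iIndepFun X P) (hlaw : ∀ n, P.map (X n) = μ) {A : Set α}
    (hA : MeasurableSet A) (hμA : μ A ≠ 0) : ∀ᵐ ω ∂P, ∃ᶠ n in atTop, X n ω ∈ A := by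
  have : IsProbabilityMeasure P := hindep.isProbabilityMeasure
  have hmeas : ∀ n, MeasurableSet (X n ⁻¹' A) := fun n => hX n hA
  have hprob : ∀ n, P (X n ⁻¹' A) = μ A := fun n => by
    rw [← hlaw n, Measure.map_apply (hX n) hA]
  have hlimsup := measure_limsup_eq_one hmeas (hindep.iIndepSet_preimage fun _ => hA)
    (by simp only [hprob, ENNReal.tsum_const_eq_top_of_ne_zero hμA])
  have hae : ∀ᵐ ω ∂P, ω ∈ limsup (fun n => X n ⁻¹' A) atTop := by
    rw [ae_mem_iff_measure_eq (MeasurableSet.measurableSet_limsup hmeas).nullMeasurableSet,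
      hlimsup, measure_univ]
  filter_upwards [hae] with ω hω using mem_limsup_iff_frequently_mem.1 hω

theorem ae_forall_frequently_lt_of_essInf_lt {μ : Measure α} {X : ℕ → Ω → α}
    (hX : ∀ n, Measurable (X n)) (hindep : iIndepFun X P) (hlaw : ∀ n, P.map (X n) = μ)
    {f : α → EReal} (hf : Measurable f) :
    ∀ᵐ ω ∂P, ∀ c, essInf f μ < c → ∃ᶠ n in atTop, f (X n ω) < c := by
  have hrat : ∀ᵐ ω ∂P, ∀ q : ℚ, essInf f μ < ((q : ℝ) : EReal) →
      ∃ᶠ n in atTop, f (X n ω) < ((q : ℝ) : EReal) := by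
    refine ae_all_iff.2 fun q => ?_
    by_cases hq : essInf f μ < ((q : ℝ) : EReal)
    · filter_upwards [ae_frequently_mem_of_iIndepFun hX hindep hlaw (hf measurableSet_Iio)
        (measure_lt_ne_zero_of_essInf_lt hq)] with ω hω _ using hω
    · exact ae_of_all _ fun ω hq' => absurd hq' hq
  filter_upwards [hrat] with ω hω c hc
  obtain ⟨q, hq, hqc⟩ := EReal.exists_rat_btwn_of_lt hc
  exact (hω q hq).mono fun n hn => hn.trans hqc

end ProbabilityTheory

theorem iInf_le_of_forall_exists_lt {β : Type*} [CompleteLinearOrder β] {a b : ℕ → β} {e : β}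
    (hab : ∀ m, a (m + 1) ≤ b m) (hb : ∀ c, e < c → ∃ m, b m < c) : ⨅ m, a m ≤ e :=
  le_of_forall_gt fun c hc =>
    let ⟨m, hm⟩ := hb c hc
    (iInf_le a (m + 1)).trans_lt ((hab m).trans_lt hm)

theorem dcbo_with_restart_general
    {Ω : Type*} [MeasurableSpace Ω] (P : Measure Ω)
    {d N : ℕ} (hN : 2 ≤ N)
    (f : Euc d → EReal) (hf : Measurable f)
    (S : Set (Euc d)) (hS : S = {y | f y < ⊤})
    (ρin : Measure (Euc d)) (hρS : ρin Sᶜ = 0)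
    -- fresh samples for each round, i.i.d. with law `ρ_in` and independent across rounds
    (y : ℕ → Fin (N - 1) → Ω → Euc d)
    (hymeas : ∀ m i, Measurable (y m i))
    (hydist : ∀ m i, Measure.map (y m i) P = ρin)
    (hyindep : iIndepFun
      (fun (q : ℕ × Fin (N - 1)) ω => y q.1 q.2 ω) P)
    -- the random sequence of best points, lying in `S`
    (pseq : ℕ → Ω → Euc d)
    -- each round of DCBO can only improve on the best of its initial positions
    (hround : ∀ m, ∀ᵐ ω ∂P, f (pseq (m + 1) ω) ≤ f (pseq m ω) ∧
      ∀ i : Fin (N - 1), f (pseq (m + 1) ω) ≤ f (y m i ω)) :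
    (∀ᵐ ω ∂P, (∀ m, f (pseq (m + 1) ω) ≤ f (pseq m ω)) ∧
      ∃ L : EReal, Tendsto (fun m => f (pseq m ω)) atTop (nhds L) ∧ L ≤ essInf f ρin) ∧
    (∀ xstar : Euc d, ContinuousOn f S → (∀ z, f xstar ≤ f z) →
      (∀ w ∈ S, ∀ U : Set (Euc d), IsOpen U → w ∈ U → 0 < ρin U) →
      ∀ᵐ ω ∂P, Tendsto (fun m => f (pseq m ω)) atTop (nhds (f xstar))) := by
  let i₀ : Fin (N - 1) := ⟨0, by omega⟩
  have hsamples := ae_forall_frequently_lt_of_essInf_lt (fun m => hymeas m i₀)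
    (hyindep.precomp (g := fun m => (m, i₀)) fun _ _ h => (Prod.mk.inj h).1)
    (fun m => hydist m i₀) hf
  have hconv : ∀ᵐ ω ∂P, (∀ m, f (pseq (m + 1) ω) ≤ f (pseq m ω)) ∧
      ∃ L : EReal, Tendsto (fun m => f (pseq m ω)) atTop (nhds L) ∧ L ≤ essInf f ρin := by
    filter_upwards [ae_all_iff.2 hround, hsamples] with ω hstep hfreq
    refine ⟨fun m => (hstep m).1, ⨅ m, f (pseq m ω),
      tendsto_atTop_iInf (antitone_nat_of_succ_le fun m => (hstep m).1), ?_⟩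
    exact iInf_le_of_forall_exists_lt (fun m => (hstep m).2 i₀) fun c hc => (hfreq c hc).exists
  refine ⟨hconv, fun xstar hcont hmin hsupp => ?_⟩
  have hess : essInf f ρin ≤ f xstar := by
    rcases (le_top : f xstar ≤ ⊤).lt_or_eq with hlt | htop
    · have hxS : xstar ∈ S := hS ▸ hlt
      exact essInf_le_of_continuousWithinAt (hcont xstar hxS) hρS (hsupp xstar hxS)
    · exact htop ▸ le_top
  filter_upwards [hconv] with ω ⟨_, L, hL, hLle⟩
  rwa [le_antisymm (hLle.trans hess) (ge_of_tendsto' hL fun m => hmin _)] at hL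

/-- DCBO with restart: Let `(p^m)` be the sequence of best points produced
by repeated rounds of DCBO, where each round `m` uses fresh i.i.d. samples
`x_0^{2,m}, …, x_0^{N,m}` of law `ρ_in` (independent across rounds) together with the
previous best point `p^m`, so that
`f(p^{m+1}) ≤ min{f(p^m), f(x_0^{2,m}), …, f(x_0^{N,m})}` almost surely.  Then, almost
surely, `f(p^m)` is monotone decreasing and `lim_m f(p^m) ≤ f*_{ρ_in}` (the essential
infimum of `f` w.r.t. `ρ_in`).  If moreover `f` is continuous on `S`, attains its global
minimum, and `supp(ρ_in) = S`, then `lim_m f(p^m) = min f` almost surely. -/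
theorem dcbo_with_restart
    {Ω : Type*} [MeasurableSpace Ω] (P : Measure Ω) [IsProbabilityMeasure P]
    {d N : ℕ} (hd : 1 ≤ d) (hN : 2 ≤ N)
    (f : Euc d → EReal) (hf : Measurable f)
    (S : Set (Euc d)) (hS : S = {y | f y < ⊤}) (hSne : S.Nonempty) (hScl : IsClosed S)
    (ρin : Measure (Euc d)) [IsProbabilityMeasure ρin] (hρS : ρin Sᶜ = 0)
    -- fresh samples for each round, i.i.d. with law `ρ_in` and independent across rounds
    (y : ℕ → Fin (N - 1) → Ω → Euc d)
    (hymeas : ∀ m i, Measurable (y m i))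
    (hydist : ∀ m i, Measure.map (y m i) P = ρin)
    (hyindep : iIndepFun
      (fun (q : ℕ × Fin (N - 1)) ω => y q.1 q.2 ω) P)
    -- the random sequence of best points, lying in `S`
    (pseq : ℕ → Ω → Euc d) (hpS : ∀ m ω, pseq m ω ∈ S)
    -- each round of DCBO can only improve on the best of its initial positions
    (hround : ∀ m, ∀ᵐ ω ∂P, f (pseq (m + 1) ω) ≤ f (pseq m ω) ∧
      ∀ i : Fin (N - 1), f (pseq (m + 1) ω) ≤ f (y m i ω)) :
    (∀ᵐ ω ∂P, (∀ m, f (pseq (m + 1) ω) ≤ f (pseq m ω)) ∧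
      ∃ L : EReal, Tendsto (fun m => f (pseq m ω)) atTop (nhds L) ∧ L ≤ essInf f ρin) ∧
    (∀ xstar : Euc d, ContinuousOn f S → (∀ z, f xstar ≤ f z) →
      (∀ w ∈ S, ∀ U : Set (Euc d), IsOpen U → w ∈ U → 0 < ρin U) →
      ∀ᵐ ω ∂P, Tendsto (fun m => f (pseq m ω)) atTop (nhds (f xstar))) :=
  dcbo_with_restart_general P hN f hf S hS ρin hρS y hymeas hydist hyindep pseq hround
end
end

section
/- Let d ≥ 1 and a, b, c > 0, and define the Ackley function F_Ack : ℝ^d → ℝ by F_Ack(x) := −a·exp(−b‖x‖/√d) − exp((1/d)Σ_{i=1}^d cos(c x_i)) + a + e, and define k_Ack : [0,∞) → [0,∞) by k_Ack(t) := a(1 − exp(−bt/√d)) + e(1 − exp(−ct/√d)). Then k_Ack is a modulus of continuity for F_Ack: k_Ack is increasing with k_Ack(0) = 0 and lim_{t→0} k_Ack(t) = 0, and for all x, y ∈ ℝ^d, |F_Ack(x) − F_Ack(y)| ≤ k_Ack(‖x − y‖). -/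
open Filter Topology Finset

noncomputable section

/-- The Ackley function on `ℝ^d`. -/
def ackley {d : ℕ} (a b c : ℝ) (x : Euc d) : ℝ :=
  -a * Real.exp (-b * ‖x‖ / Real.sqrt d)
    - Real.exp ((∑ i : Fin d, Real.cos (c * x i)) / d)
    + a + Real.exp 1

/-- The claimed modulus of continuity for the Ackley function. -/
def kAck (d : ℕ) (a b c : ℝ) (t : ℝ) : ℝ :=
  a * (1 - Real.exp (-b * t / Real.sqrt d)) + Real.exp 1 * (1 - Real.exp (-c * t / Real.sqrt d))

/-- Key estimate: for `u, v ≤ M`, `|e^u − e^v| ≤ e^M (1 − e^{−|u−v|})`. -/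
lemma exp_sub_exp_key (u v M : ℝ) (hu : u ≤ M) (hv : v ≤ M) :
    |Real.exp u - Real.exp v| ≤ Real.exp M * (1 - Real.exp (-|u - v|)) := by
  wlog h : v ≤ u generalizing u v
  · rw [abs_sub_comm, abs_sub_comm u v]
    exact this v u hv hu (le_of_not_ge h)
  rw [abs_of_nonneg (sub_nonneg.2 (Real.exp_le_exp.2 h)), abs_of_nonneg (sub_nonneg.2 h)]
  have key : Real.exp u - Real.exp v = Real.exp u * (1 - Real.exp (-(u - v))) := by
    rw [mul_sub, mul_one, ← Real.exp_add]
    ring_nf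
  rw [key]
  have h1 : 0 ≤ 1 - Real.exp (-(u - v)) := by
    have := Real.exp_le_one_iff.2 (neg_nonpos.2 (sub_nonneg.2 h))
    linarith
  exact mul_le_mul (Real.exp_le_exp.2 hu) le_rfl h1 (Real.exp_pos M).le

/-- Lipschitz bound for cosine. -/
lemma cos_lip (s t : ℝ) : |Real.cos s - Real.cos t| ≤ |s - t| := by
  rw [Real.cos_sub_cos]
  have h1 : |Real.sin ((s + t) / 2)| ≤ 1 := Real.abs_sin_le_one _
  have h2 : |Real.sin ((s - t) / 2)| ≤ |(s - t) / 2| := Real.abs_sin_le_abs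
  have h3 : |(s - t) / 2| = |s - t| / 2 := by rw [abs_div]; norm_num
  rw [abs_mul, abs_mul]
  have h4 : |(-2 : ℝ)| = 2 := by norm_num
  rw [h4]
  nlinarith [abs_nonneg (Real.sin ((s + t) / 2)), abs_nonneg (Real.sin ((s - t) / 2)),
    abs_nonneg (s - t)]

/-- ℓ¹–ℓ² comparison: `∑ |z i| ≤ √d ‖z‖`. -/
lemma sum_abs_le_sqrt_mul_norm {d : ℕ} (z : Euc d) :
    ∑ i : Fin d, |z i| ≤ Real.sqrt d * ‖z‖ := by
  have h := Finset.sum_mul_sq_le_sq_mul_sq Finset.univ (fun i : Fin d => |z i|) (fun _ => 1)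
  simp only [mul_one, one_pow, Finset.sum_const, Finset.card_univ, Fintype.card_fin,
    nsmul_eq_mul, mul_one, sq_abs] at h
  have hnorm : ‖z‖ = Real.sqrt (∑ i : Fin d, (z i) ^ 2) := by
    rw [EuclideanSpace.norm_eq]
    congr 1
    exact Finset.sum_congr rfl fun i _ => by rw [Real.norm_eq_abs, sq_abs]
  have hnn : 0 ≤ ∑ i : Fin d, |z i| := Finset.sum_nonneg fun i _ => abs_nonneg _
  have h2 := Real.sqrt_le_sqrt h
  rw [Real.sqrt_sq hnn, Real.sqrt_mul (Finset.sum_nonneg fun i _ => sq_nonneg (z i))] at h2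
  rw [hnorm, mul_comm]
  exact h2

/-- `k_Ack` is a modulus of continuity for the Ackley function:
it is increasing on `[0,∞)`, vanishes and is continuous at `0`, and
`|F_Ack(x) − F_Ack(y)| ≤ k_Ack(‖x − y‖)` for all `x, y ∈ ℝ^d`. -/
theorem ackley_modulus_of_continuity
    {d : ℕ} (hd : 1 ≤ d) (a b c : ℝ) (ha : 0 < a) (hb : 0 < b) (hc : 0 < c) :
    MonotoneOn (kAck d a b c) (Set.Ici (0:ℝ)) ∧
    kAck d a b c 0 = 0 ∧
    Tendsto (kAck d a b c) (nhdsWithin 0 (Set.Ici (0:ℝ))) (nhds 0) ∧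
    (∀ x y : Euc d, |ackley a b c x - ackley a b c y| ≤ kAck d a b c ‖x - y‖) := by
  have hdpos : (0:ℝ) < d := by exact_mod_cast Nat.lt_of_lt_of_le Nat.zero_lt_one hd
  have hsd : (0:ℝ) < Real.sqrt d := Real.sqrt_pos.2 hdpos
  have hk0 : kAck d a b c 0 = 0 := by simp [kAck]
  have hmono : MonotoneOn (kAck d a b c) (Set.Ici (0:ℝ)) := by
    intro s _ t _ hst
    unfold kAck
    have h1 : Real.exp (-b * t / Real.sqrt d) ≤ Real.exp (-b * s / Real.sqrt d) :=
      Real.exp_le_exp.2 (div_le_div_of_nonneg_right (by nlinarith) hsd.le)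
    have h2 : Real.exp (-c * t / Real.sqrt d) ≤ Real.exp (-c * s / Real.sqrt d) :=
      Real.exp_le_exp.2 (div_le_div_of_nonneg_right (by nlinarith) hsd.le)
    have := Real.exp_pos 1
    nlinarith
  refine ⟨hmono, hk0, ?_, ?_⟩
  · have hcont : ContinuousAt (kAck d a b c) 0 := by
      unfold kAck
      fun_prop
    have h := hcont.continuousWithinAt (s := Set.Ici (0:ℝ))
    rw [ContinuousWithinAt, hk0] at h
    exact h
  · intro x y
    set n := ‖x - y‖ with hn
    have hnnn : 0 ≤ n := norm_nonneg _
    -- first term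
    have term1 : |Real.exp (-b * ‖x‖ / Real.sqrt d) - Real.exp (-b * ‖y‖ / Real.sqrt d)|
        ≤ 1 - Real.exp (-b * n / Real.sqrt d) := by
      have hu : -b * ‖x‖ / Real.sqrt d ≤ 0 :=
        div_nonpos_of_nonpos_of_nonneg (by nlinarith [norm_nonneg x]) hsd.le
      have hv : -b * ‖y‖ / Real.sqrt d ≤ 0 :=
        div_nonpos_of_nonpos_of_nonneg (by nlinarith [norm_nonneg y]) hsd.le
      have h := exp_sub_exp_key (-b * ‖x‖ / Real.sqrt d) (-b * ‖y‖ / Real.sqrt d) 0 hu hv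
      rw [Real.exp_zero, one_mul] at h
      refine h.trans ?_
      have habs : |(-b * ‖x‖ / Real.sqrt d) - (-b * ‖y‖ / Real.sqrt d)|
          = b * |‖y‖ - ‖x‖| / Real.sqrt d := by
        rw [show (-b * ‖x‖ / Real.sqrt d) - (-b * ‖y‖ / Real.sqrt d)
            = b * (‖y‖ - ‖x‖) / Real.sqrt d by ring,
          abs_div, abs_mul, abs_of_pos hb, abs_of_pos hsd]
      have hnb : |‖y‖ - ‖x‖| ≤ n := by
        rw [hn, ← norm_sub_rev]
        exact abs_norm_sub_norm_le y x
      have : -b * n / Real.sqrt d ≤ -(b * |‖y‖ - ‖x‖| / Real.sqrt d) := by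
        have h9 : b * |‖y‖ - ‖x‖| / Real.sqrt d ≤ b * n / Real.sqrt d :=
          div_le_div_of_nonneg_right (by nlinarith) hsd.le
        have h10 : -b * n / Real.sqrt d = -(b * n / Real.sqrt d) := by ring
        linarith [h10.le, h10.ge]
      have := Real.exp_le_exp.2 this
      rw [habs]
      linarith
    -- second term
    have hSx : (∑ i : Fin d, Real.cos (c * x i)) / d ≤ 1 := by
      rw [div_le_one hdpos]
      calc (∑ i : Fin d, Real.cos (c * x i)) ≤ ∑ i : Fin d, (1:ℝ) :=
            Finset.sum_le_sum fun i _ => Real.cos_le_one _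
        _ = d := by simp
    have hSy : (∑ i : Fin d, Real.cos (c * y i)) / d ≤ 1 := by
      rw [div_le_one hdpos]
      calc (∑ i : Fin d, Real.cos (c * y i)) ≤ ∑ i : Fin d, (1:ℝ) :=
            Finset.sum_le_sum fun i _ => Real.cos_le_one _
        _ = d := by simp
    have hdiff : |(∑ i : Fin d, Real.cos (c * x i)) / d - (∑ i : Fin d, Real.cos (c * y i)) / d|
        ≤ c * n / Real.sqrt d := by
      rw [div_sub_div_same, ← Finset.sum_sub_distrib, abs_div, abs_of_pos hdpos]
      have hstep : |∑ i : Fin d, (Real.cos (c * x i) - Real.cos (c * y i))|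
          ≤ c * (Real.sqrt d * n) := by
        calc |∑ i : Fin d, (Real.cos (c * x i) - Real.cos (c * y i))|
            ≤ ∑ i : Fin d, |Real.cos (c * x i) - Real.cos (c * y i)| :=
              Finset.abs_sum_le_sum_abs _ _
          _ ≤ ∑ i : Fin d, c * |x i - y i| := by
              refine Finset.sum_le_sum fun i _ => ?_
              calc |Real.cos (c * x i) - Real.cos (c * y i)| ≤ |c * x i - c * y i| :=
                    cos_lip _ _
                _ = c * |x i - y i| := by
                    rw [← mul_sub, abs_mul, abs_of_pos hc]
          _ = c * ∑ i : Fin d, |x i - y i| := by rw [Finset.mul_sum]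
          _ ≤ c * (Real.sqrt d * n) := by
              have h := sum_abs_le_sqrt_mul_norm (x - y)
              have hco : ∀ i : Fin d, (x - y) i = x i - y i := fun i => rfl
              simp only [hco] at h
              exact mul_le_mul_of_nonneg_left h hc.le
      refine (div_le_div_of_nonneg_right hstep hdpos.le).trans ?_
      rw [show c * (Real.sqrt d * n) / (d:ℝ) = c * n * (Real.sqrt d / d) by ring,
        show c * n / Real.sqrt d = c * n * (1 / Real.sqrt d) by ring]
      have : Real.sqrt d / (d:ℝ) = 1 / Real.sqrt d := by
        rw [eq_div_iff (ne_of_gt hsd), div_mul_eq_mul_div, Real.mul_self_sqrt hdpos.le,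
          div_self (ne_of_gt hdpos)]
      rw [this]
    have term2 : |Real.exp ((∑ i : Fin d, Real.cos (c * x i)) / d)
        - Real.exp ((∑ i : Fin d, Real.cos (c * y i)) / d)|
        ≤ Real.exp 1 * (1 - Real.exp (-c * n / Real.sqrt d)) := by
      have h := exp_sub_exp_key _ _ 1 hSx hSy
      refine h.trans ?_
      have hmono2 : Real.exp (-c * n / Real.sqrt d)
          ≤ Real.exp (-|(∑ i : Fin d, Real.cos (c * x i)) / d
            - (∑ i : Fin d, Real.cos (c * y i)) / d|) := by
        apply Real.exp_le_exp.2
        rw [neg_mul, neg_div]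
        linarith
      have := Real.exp_pos 1
      nlinarith
    -- combine
    have hsplit : ackley a b c x - ackley a b c y
        = a * (Real.exp (-b * ‖y‖ / Real.sqrt d) - Real.exp (-b * ‖x‖ / Real.sqrt d))
          + (Real.exp ((∑ i : Fin d, Real.cos (c * y i)) / d)
            - Real.exp ((∑ i : Fin d, Real.cos (c * x i)) / d)) := by
      unfold ackley
      ring
    rw [hsplit]
    unfold kAck
    calc |a * (Real.exp (-b * ‖y‖ / Real.sqrt d) - Real.exp (-b * ‖x‖ / Real.sqrt d))
          + (Real.exp ((∑ i : Fin d, Real.cos (c * y i)) / d)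
            - Real.exp ((∑ i : Fin d, Real.cos (c * x i)) / d))|
        ≤ |a * (Real.exp (-b * ‖y‖ / Real.sqrt d) - Real.exp (-b * ‖x‖ / Real.sqrt d))|
          + |Real.exp ((∑ i : Fin d, Real.cos (c * y i)) / d)
            - Real.exp ((∑ i : Fin d, Real.cos (c * x i)) / d)| := abs_add_le _ _
      _ ≤ a * (1 - Real.exp (-b * n / Real.sqrt d))
          + Real.exp 1 * (1 - Real.exp (-c * n / Real.sqrt d)) := by
          rw [abs_mul, abs_of_pos ha, abs_sub_comm (Real.exp (-b * ‖y‖ / Real.sqrt d)),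
            abs_sub_comm (Real.exp ((∑ i : Fin d, Real.cos (c * y i)) / d))]
          have := mul_le_mul_of_nonneg_left term1 ha.le
          linarith
end
end
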